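/- Fix an integer ℓ > 2. Suppose a partition λ is not an (ℓ,0)-JM partition. Then there exist boxes (c,d), (c,w), (z,d) in the Young diagram of λ with c < z and d < w such that ℓ divides h_{(c,d)}^λ, ℓ does not divide h_{(c,w)}^λ, and ℓ does not divide h_{(z,d)}^λ. -/

import Mathlib

noncomputable section

/-!
Common combinatorial definitions: partitions (English notation, rows indexed from 1),
Young diagrams, hooks, rim hooks, ladders, residues, crystal operators (classical and
ladder versions), locked boxes, regularization classes, dominance order.
-/

structure YPartition where
  part : ℕ → ℕ
  zero_at_zero : part 0 = 0
  antitone : ∀ i j : ℕ, 1 ≤ i → i ≤ j → part j ≤ part i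
  eventually_zero : ∃ N : ℕ, ∀ i : ℕ, N ≤ i → part i = 0

namespace YPartition

/-- The set of boxes of the Young diagram of `μ` (row, column), both indices ≥ 1. -/
def cells (μ : YPartition) : Set (ℕ × ℕ) :=
  {p | 1 ≤ p.1 ∧ 1 ≤ p.2 ∧ p.2 ≤ μ.part p.1}

/-- The length of column `b`: the number of rows containing a box in column `b`. -/
def colLen (μ : YPartition) (b : ℕ) : ℕ :=
  Nat.card {a : ℕ | 1 ≤ a ∧ b ≤ μ.part a}

/-- The arm of box `(a,b)`: boxes strictly to its right in its row. -/
def arm (μ : YPartition) (a b : ℕ) : ℕ := μ.part a - b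

/-- The leg of box `(a,b)`: boxes strictly below it in its column. -/
def leg (μ : YPartition) (a b : ℕ) : ℕ := μ.colLen b - a

/-- The hook length of the box `(a,b)`: arm + leg + 1. -/
def hook (μ : YPartition) (a b : ℕ) : ℕ := (μ.part a - b) + (μ.colLen b - a) + 1

/-- The number of boxes of `μ`. -/
def size (μ : YPartition) : ℕ := μ.cells.ncard

/-- The number of (nonzero) parts of `μ`. -/
def length (μ : YPartition) : ℕ := μ.colLen 1

/-- `μ` is an `(ℓ,0)`-JM partition: there are no boxes `(a,b)`, `(a,y)`, `(x,b)` with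
`ℓ ∣ hook (a,b)` while `ℓ` divides neither `hook (a,y)` nor `hook (x,b)`. -/
def IsJM (ℓ : ℕ) (μ : YPartition) : Prop :=
  ¬ ∃ a b y x : ℕ, (a, b) ∈ μ.cells ∧ (a, y) ∈ μ.cells ∧ (x, b) ∈ μ.cells ∧
    ℓ ∣ μ.hook a b ∧ ¬ ℓ ∣ μ.hook a y ∧ ¬ ℓ ∣ μ.hook x b

/-- Two boxes share an edge. -/
def BoxAdjacent (p q : ℕ × ℕ) : Prop :=
  (p.1 = q.1 ∧ (p.2 + 1 = q.2 ∨ q.2 + 1 = p.2)) ∨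
  (p.2 = q.2 ∧ (p.1 + 1 = q.1 ∨ q.1 + 1 = p.1))

/-- A set of boxes is connected (via shared edges, inside the set). -/
def SetConnected (S : Set (ℕ × ℕ)) : Prop :=
  ∀ p ∈ S, ∀ q ∈ S,
    Relation.ReflTransGen (fun x y => x ∈ S ∧ y ∈ S ∧ BoxAdjacent x y) p q

/-- `S` contains no 2 × 2 square of boxes. -/
def HasNoSquare (S : Set (ℕ × ℕ)) : Prop :=
  ¬ ∃ a b : ℕ, (a, b) ∈ S ∧ (a + 1, b) ∈ S ∧ (a, b + 1) ∈ S ∧ (a + 1, b + 1) ∈ S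

/-- `S` is a removable `ℓ`-rim hook of `μ`: a connected set of `ℓ` boxes of `μ` with no
2 × 2 square whose removal leaves the Young diagram of a partition. -/
def IsRimHook (ℓ : ℕ) (μ : YPartition) (S : Set (ℕ × ℕ)) : Prop :=
  S ⊆ μ.cells ∧ S.ncard = ℓ ∧ SetConnected S ∧ HasNoSquare S ∧
    ∃ ν : YPartition, ν.cells = μ.cells \ S

/-- `S` is contained in a single row. -/
def HorizontalHook (S : Set (ℕ × ℕ)) : Prop := ∃ a : ℕ, ∀ p ∈ S, p.1 = a

/-- `S` is contained in a single column. -/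
def VerticalHook (S : Set (ℕ × ℕ)) : Prop := ∃ b : ℕ, ∀ p ∈ S, p.2 = b

/-- Two sets of boxes are adjacent when some box of one shares an edge with a box of the other. -/
def SetsAdjacent (R S : Set (ℕ × ℕ)) : Prop := ∃ p ∈ R, ∃ q ∈ S, BoxAdjacent p q

/-- An `ℓ`-core: a partition with no removable `ℓ`-rim hook. -/
def IsCore (ℓ : ℕ) (μ : YPartition) : Prop := ¬ ∃ S : Set (ℕ × ℕ), IsRimHook ℓ μ S

/-- `p` and `q` lie on the same ladder: going down one column step the row increases
by `ℓ - 1`. -/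
def SameLadder (ℓ : ℕ) (p q : ℕ × ℕ) : Prop :=
  (q.1 : ℤ) - (p.1 : ℤ) = ((ℓ : ℤ) - 1) * ((p.2 : ℤ) - (q.2 : ℤ))

/-- The index of the ladder through `p`: the ladder through `(k,1)` has index `k`. -/
def ladderIdx (ℓ : ℕ) (p : ℕ × ℕ) : ℕ := p.1 + (ℓ - 1) * (p.2 - 1)

/-- The residue of position `(a,b)` is `b - a` mod `ℓ`. -/
def res (ℓ : ℕ) (p : ℕ × ℕ) : ℕ := (((p.2 : ℤ) - (p.1 : ℤ)) % (ℓ : ℤ)).toNat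

/-- `p` is a removable box of `μ`. -/
def Removable (μ : YPartition) (p : ℕ × ℕ) : Prop :=
  1 ≤ p.1 ∧ p.2 = μ.part p.1 ∧ μ.part (p.1 + 1) < p.2

/-- `p` is an addable box of `μ`. -/
def Addable (μ : YPartition) (p : ℕ × ℕ) : Prop :=
  1 ≤ p.1 ∧ p.2 = μ.part p.1 + 1 ∧ (p.1 = 1 ∨ p.2 ≤ μ.part (p.1 - 1))

/-- The removable `i`-boxes of `μ`. -/
def RemovableRes (ℓ i : ℕ) (μ : YPartition) : Set (ℕ × ℕ) :=
  {p | Removable μ p ∧ res ℓ p = i}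

/-- The addable `i`-boxes of `μ`. -/
def AddableRes (ℓ i : ℕ) (μ : YPartition) : Set (ℕ × ℕ) :=
  {p | Addable μ p ∧ res ℓ p = i}

/-- Ladder reading order (reflexive): ladders left to right, top to bottom within a ladder.
`LadderLE ℓ p q` means `p` is read before (or equal to) `q`. -/
def LadderLE (ℓ : ℕ) (p q : ℕ × ℕ) : Prop :=
  ladderIdx ℓ p < ladderIdx ℓ q ∨ (ladderIdx ℓ p = ladderIdx ℓ q ∧ p.1 ≤ q.1)

/-- Strict ladder reading order. -/
def LadderLT (ℓ : ℕ) (p q : ℕ × ℕ) : Prop :=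
  ladderIdx ℓ p < ladderIdx ℓ q ∨ (ladderIdx ℓ p = ladderIdx ℓ q ∧ p.1 < q.1)

/-- Classical reading order (reflexive): rows from bottom to top.
`RowLE p q` means `p` is read before (or equal to) `q`. -/
def RowLE (p q : ℕ × ℕ) : Prop := q.1 ≤ p.1

/-- Given a reading order `le`, a set `Rem` of `-` marks and `Add` of `+` marks, a `-` at `p`
survives the cancellation of adjacent `-+` pairs iff every interval of the reading word
starting at `p` contains strictly more `-`'s than `+`'s. -/
def NormalIn (le : ℕ × ℕ → ℕ × ℕ → Prop) (Rem Add : Set (ℕ × ℕ)) (p : ℕ × ℕ) : Prop :=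
  p ∈ Rem ∧ ∀ q ∈ Rem ∪ Add, le p q →
    (Add ∩ {s | le p s ∧ le s q}).ncard < (Rem ∩ {s | le p s ∧ le s q}).ncard

/-- A `+` at `q` survives the cancellation of adjacent `-+` pairs iff every interval of the
reading word ending at `q` contains strictly more `+`'s than `-`'s. -/
def ConormalIn (le : ℕ × ℕ → ℕ × ℕ → Prop) (Rem Add : Set (ℕ × ℕ)) (q : ℕ × ℕ) : Prop :=
  q ∈ Add ∧ ∀ p ∈ Rem ∪ Add, le p q →
    (Rem ∩ {s | le p s ∧ le s q}).ncard < (Add ∩ {s | le p s ∧ le s q}).ncard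

/-- Ladder normal `i`-box. -/
def LadderNormal (ℓ i : ℕ) (μ : YPartition) (p : ℕ × ℕ) : Prop :=
  NormalIn (LadderLE ℓ) (RemovableRes ℓ i μ) (AddableRes ℓ i μ) p

/-- Ladder conormal `i`-box. -/
def LadderConormal (ℓ i : ℕ) (μ : YPartition) (p : ℕ × ℕ) : Prop :=
  ConormalIn (LadderLE ℓ) (RemovableRes ℓ i μ) (AddableRes ℓ i μ) p

/-- Normal `i`-box (classical signature). -/
def ClassNormal (ℓ i : ℕ) (μ : YPartition) (p : ℕ × ℕ) : Prop :=
  NormalIn RowLE (RemovableRes ℓ i μ) (AddableRes ℓ i μ) p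

/-- Conormal `i`-box (classical signature). -/
def ClassConormal (ℓ i : ℕ) (μ : YPartition) (p : ℕ × ℕ) : Prop :=
  ConormalIn RowLE (RemovableRes ℓ i μ) (AddableRes ℓ i μ) p

/-- `ε̂_i(μ)`: number of ladder normal `i`-boxes. -/
def hatEps (ℓ i : ℕ) (μ : YPartition) : ℕ := {p | LadderNormal ℓ i μ p}.ncard

/-- `φ̂_i(μ)`: number of ladder conormal `i`-boxes. -/
def hatPhi (ℓ i : ℕ) (μ : YPartition) : ℕ := {p | LadderConormal ℓ i μ p}.ncard

/-- `ε_i(μ)`: number of normal `i`-boxes. -/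
def eps (ℓ i : ℕ) (μ : YPartition) : ℕ := {p | ClassNormal ℓ i μ p}.ncard

/-- `φ_i(μ)`: number of conormal `i`-boxes. -/
def phi (ℓ i : ℕ) (μ : YPartition) : ℕ := {p | ClassConormal ℓ i μ p}.ncard

/-- The ladder good `i`-box: the leftmost `-` of the reduced ladder `i`-signature. -/
def LadderGood (ℓ i : ℕ) (μ : YPartition) (p : ℕ × ℕ) : Prop :=
  LadderNormal ℓ i μ p ∧ ∀ q, LadderNormal ℓ i μ q → LadderLE ℓ p q

/-- The ladder cogood `i`-box: the rightmost `+` of the reduced ladder `i`-signature. -/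
def LadderCogood (ℓ i : ℕ) (μ : YPartition) (p : ℕ × ℕ) : Prop :=
  LadderConormal ℓ i μ p ∧ ∀ q, LadderConormal ℓ i μ q → LadderLE ℓ q p

/-- The good `i`-box (classical). -/
def ClassGood (ℓ i : ℕ) (μ : YPartition) (p : ℕ × ℕ) : Prop :=
  ClassNormal ℓ i μ p ∧ ∀ q, ClassNormal ℓ i μ q → RowLE p q

/-- The cogood `i`-box (classical). -/
def ClassCogood (ℓ i : ℕ) (μ : YPartition) (p : ℕ × ℕ) : Prop :=
  ClassConormal ℓ i μ p ∧ ∀ q, ClassConormal ℓ i μ q → RowLE q p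

/-- The ladder crystal operator `f̂_i` as a relation: `mu = f̂_i lam ≠ 0`. -/
def HatF (ℓ i : ℕ) (lam mu : YPartition) : Prop :=
  ∃ p, LadderCogood ℓ i lam p ∧ mu.cells = insert p lam.cells

/-- The ladder crystal operator `ê_i` as a relation: `mu = ê_i lam ≠ 0`. -/
def HatE (ℓ i : ℕ) (lam mu : YPartition) : Prop :=
  ∃ p, LadderGood ℓ i lam p ∧ mu.cells = lam.cells \ {p}

/-- The classical crystal operator `f̃_i` as a relation: `mu = f̃_i lam ≠ 0`. -/
def TildeF (ℓ i : ℕ) (lam mu : YPartition) : Prop :=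
  ∃ p, ClassCogood ℓ i lam p ∧ mu.cells = insert p lam.cells

/-- The classical crystal operator `ẽ_i` as a relation: `mu = ẽ_i lam ≠ 0`. -/
def TildeE (ℓ i : ℕ) (lam mu : YPartition) : Prop :=
  ∃ p, ClassGood ℓ i lam p ∧ mu.cells = lam.cells \ {p}

/-- `n`-fold composition of a relation. -/
def RelIter {α : Type} (r : α → α → Prop) : ℕ → α → α → Prop
  | 0 => fun a b => a = b
  | n + 1 => fun a b => ∃ c, r a c ∧ RelIter r n c b

/-- The empty partition. -/
def emptyP : YPartition where
  part := fun _ => 0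
  zero_at_zero := rfl
  antitone := fun _ _ _ _ => le_rfl
  eventually_zero := ⟨0, fun _ _ => rfl⟩

/-- `μ` is a node of the ladder crystal `B(Λ₀)^L`: it is obtained from the empty
partition by finitely many applications of the operators `f̂_i`, `0 ≤ i < ℓ`. -/
def LadderNode (ℓ : ℕ) (μ : YPartition) : Prop :=
  Relation.ReflTransGen (fun a b => ∃ i : ℕ, i < ℓ ∧ HatF ℓ i a b) emptyP μ

/-- The type I locking condition at `(a,b)`: every unoccupied position on the ladder of
`(a,b)` lying below it has an unoccupied position directly above it. -/
def LadderClear (ℓ : ℕ) (μ : YPartition) (a b : ℕ) : Prop :=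
  ∀ c d : ℕ, 1 ≤ c → 1 ≤ d → SameLadder ℓ (a, b) (c, d) → a < c →
    (c, d) ∉ μ.cells → (c - 1, d) ∉ μ.cells

/-- Locked boxes of `μ`. -/
inductive Locked (ℓ : ℕ) (μ : YPartition) : ℕ × ℕ → Prop where
  | typeI_top : ∀ b : ℕ, (1, b) ∈ μ.cells → LadderClear ℓ μ 1 b → Locked ℓ μ (1, b)
  | typeI_up : ∀ a b : ℕ, (a + 1, b) ∈ μ.cells → Locked ℓ μ (a, b) →
      LadderClear ℓ μ (a + 1) b → Locked ℓ μ (a + 1, b)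
  | typeII : ∀ a b b' : ℕ, (a, b) ∈ μ.cells → b < b' → Locked ℓ μ (a, b') → Locked ℓ μ (a, b)

/-- Number of boxes of `μ` on the `k`-th ladder. -/
def ladderCount (ℓ : ℕ) (μ : YPartition) (k : ℕ) : ℕ :=
  (μ.cells ∩ {p | ladderIdx ℓ p = k}).ncard

/-- `lam` and `mu` lie in the same regularization class: they have the same number of
boxes on every ladder. -/
def SameRegClass (ℓ : ℕ) (lam mu : YPartition) : Prop :=
  ∀ k : ℕ, ladderCount ℓ lam k = ladderCount ℓ mu k

/-- The boxes of `μ` are top-justified on each ladder. -/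
def TopJustified (ℓ : ℕ) (μ : YPartition) : Prop :=
  ∀ p ∈ μ.cells, ∀ q : ℕ × ℕ, 1 ≤ q.1 → 1 ≤ q.2 →
    ladderIdx ℓ q = ladderIdx ℓ p → q.1 < p.1 → q ∈ μ.cells

/-- `mu = R lam`: the regularization of `lam`, obtained by moving every box of `lam` to
the topmost unoccupied positions of its ladder. -/
def IsRegularization (ℓ : ℕ) (lam mu : YPartition) : Prop :=
  SameRegClass ℓ lam mu ∧ TopJustified ℓ mu

/-- Dominance order on partitions. -/
def DomLE (lam mu : YPartition) : Prop :=
  ∀ j : ℕ, ∑ i ∈ Finset.Icc 1 j, lam.part i ≤ ∑ i ∈ Finset.Icc 1 j, mu.part i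

/-- All (positive) positions on the `k`-th ladder. -/
def LadderPositions (ℓ k : ℕ) : Set (ℕ × ℕ) :=
  {p | 1 ≤ p.1 ∧ 1 ≤ p.2 ∧ ladderIdx ℓ p = k}

/-- The set of locked boxes of `μ`. -/
def lockedCells (ℓ : ℕ) (μ : YPartition) : Set (ℕ × ℕ) := {p | Locked ℓ μ p}

/-- The number of unlocked boxes of `μ` on the `k`-th ladder. -/
def unlockedCount (ℓ : ℕ) (μ : YPartition) (k : ℕ) : ℕ :=
  ((μ.cells ∩ LadderPositions ℓ k) \ lockedCells ℓ μ).ncard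

/-- The diagram `S μ`: locked boxes stay put, and on each ladder the unlocked boxes are
moved into the lowest positions of that ladder not occupied by locked boxes. -/
def SCells (ℓ : ℕ) (μ : YPartition) : Set (ℕ × ℕ) :=
  lockedCells ℓ μ ∪
    {p | 1 ≤ p.1 ∧ 1 ≤ p.2 ∧ p ∉ lockedCells ℓ μ ∧
      ((LadderPositions ℓ (ladderIdx ℓ p) ∩ {q | p.1 < q.1}) \ lockedCells ℓ μ).ncard
        < unlockedCount ℓ μ (ladderIdx ℓ p)}

/-- `μ` is `ℓ`-regular: no part occurs `ℓ` or more times. -/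
def IsRegular (ℓ : ℕ) (μ : YPartition) : Prop :=
  ∀ a : ℕ, 1 ≤ a → 0 < μ.part (a + (ℓ - 1)) → μ.part (a + (ℓ - 1)) < μ.part a

/-- Removal of a single horizontal or vertical `ℓ`-rim hook. -/
def RemoveHV (ℓ : ℕ) (lam mu : YPartition) : Prop :=
  ∃ S : Set (ℕ × ℕ), IsRimHook ℓ lam S ∧ (HorizontalHook S ∨ VerticalHook S) ∧
    mu.cells = lam.cells \ S

/-- Condition (1): every removable `ℓ`-rim hook is horizontal or vertical. -/
def Cond1 (ℓ : ℕ) (μ : YPartition) : Prop :=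
  ∀ S : Set (ℕ × ℕ), IsRimHook ℓ μ S → HorizontalHook S ∨ VerticalHook S

/-- Condition (2): no vertical (resp. horizontal) `ℓ`-rim hook `R` of `μ` together with an
adjacent horizontal (resp. vertical) `ℓ`-rim hook `S` of `μ \ R` . -/
def Cond2 (ℓ : ℕ) (μ : YPartition) : Prop :=
  ¬ ∃ (R S : Set (ℕ × ℕ)) (ν : YPartition), IsRimHook ℓ μ R ∧ ν.cells = μ.cells \ R ∧
    IsRimHook ℓ ν S ∧ SetsAdjacent R S ∧
    ((VerticalHook R ∧ HorizontalHook S) ∨ (HorizontalHook R ∧ VerticalHook S))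

/-- A generalized `ℓ`-partition: conditions (1) and (2) hold after removing any sequence of
horizontal and vertical `ℓ`-rim hooks (including the empty sequence). -/
def IsGenLPartition (ℓ : ℕ) (lam : YPartition) : Prop :=
  ∀ mu : YPartition, Relation.ReflTransGen (RemoveHV ℓ) lam mu → Cond1 ℓ mu ∧ Cond2 ℓ mu

/-- The `t`-th row (from the top) of the bottom block of the decomposition
`(μ, r, s, ρ, σ)`: the number of values `v ∈ [1, s+1]` whose column block still reaches
row `t`; column block `v` consists of `σ_v·ℓ + (s+1−v)(ℓ−1)` rows of length `≥ v`. -/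
def bottomPart (ℓ s : ℕ) (σ : YPartition) (t : ℕ) : ℕ :=
  ((Finset.Icc 1 (s + 1)).filter fun v => t ≤ σ.part v * ℓ + (s + 1 - v) * (ℓ - 1)).card

/-- The `i`-th part of the partition corresponding to the data `(μ, r, s, ρ, σ)`. -/
def decompPart (ℓ : ℕ) (mu : YPartition) (r s : ℕ) (ρ σ : YPartition) (i : ℕ) : ℕ :=
  if i = 0 then 0
  else if i ≤ r + 1 then s + mu.part 1 + (r + 1 - i) * (ℓ - 1) + ρ.part i * ℓ
  else if i ≤ r + max mu.length 1 then s + mu.part (i - r)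
  else bottomPart ℓ s σ (i - (r + max mu.length 1))

/-- Admissibility of the decomposition data `(μ, r, s, ρ, σ)`. -/
def GoodData (ℓ : ℕ) (mu : YPartition) (r s : ℕ) (ρ σ : YPartition) : Prop :=
  IsCore ℓ mu ∧ mu.part 1 < mu.part 2 + (ℓ - 1) ∧ mu.colLen 1 < mu.colLen 2 + (ℓ - 1) ∧
  ρ.length ≤ r + 1 ∧ σ.length ≤ s + 1 ∧
  (mu.cells = ∅ → ρ.part (r + 1) = 0 ∨ σ.part (s + 1) = 0)

/-- `lam ≈ (μ, r, s, ρ, σ)`. -/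
def Decomposes (ℓ : ℕ) (lam mu : YPartition) (r s : ℕ) (ρ σ : YPartition) : Prop :=
  ∀ i : ℕ, lam.part i = decompPart ℓ mu r s ρ σ i

/-- Removal of a single `ℓ`-rim hook. -/
def RemoveHook (ℓ : ℕ) (lam mu : YPartition) : Prop :=
  ∃ S : Set (ℕ × ℕ), IsRimHook ℓ lam S ∧ mu.cells = lam.cells \ S

/-- `lam` has `ℓ`-core `nu` and `ℓ`-weight `w`. -/
def HasCoreAndWeight (ℓ : ℕ) (lam nu : YPartition) (w : ℕ) : Prop :=
  IsCore ℓ nu ∧ RelIter (RemoveHook ℓ) w lam nu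

/-- An L-partition. -/
def IsLPartition (ℓ : ℕ) (lam : YPartition) : Prop :=
  ¬ ∃ p : ℕ × ℕ, p ∈ lam.cells ∧ ℓ ∣ lam.hook p.1 p.2 ∧
    (lam.arm p.1 p.2 < (ℓ - 1) * lam.leg p.1 p.2 ∨
     lam.leg p.1 p.2 < (ℓ - 1) * lam.arm p.1 p.2)

end YPartition


/-!
Encode a partition by its Maya diagram: row `r` is a bead at `λ_r - r` and column `c` a gap at
`c - 1 - λ'_c`. Every integer is a bead or a gap, the box `(r, c)` lies in `λ` iff the gap of `c`
is below the bead of `r`, and then its hook length is their distance. A violation of the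
JM condition is a gap `D` below a bead `B` with `ℓ ∣ B - D`, a gap `E < B` with `ℓ ∤ B - E` and a
bead `F > D` with `ℓ ∤ F - D`, and we need such a configuration with `E` and `F` strictly between
`D` and `B`. If some gap and some bead in `(D, B)` qualify, we are done. If no gap does, then
`D + 1, …, D + ℓ - 1` are beads and `E < D`; take the largest gap `g ≤ D` with `ℓ ∤ B - g` and
the bead `b = D + j ≡ g (mod ℓ)` with `0 < j < ℓ`: the gap `D` and the bead `D + 1` (or `D - 1`
when `j = 1`, using `ℓ > 2`) lie between `g` and `b`. If no bead qualifies, reflect the diagram.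
-/

open scoped Pointwise

section Abacus

variable {ℓ : ℤ} {Gap Bead : Set ℤ}

lemma Int.not_dvd_of_pos_of_lt {k : ℤ} (h0 : 0 < k) (hk : k < ℓ) : ¬ ℓ ∣ k :=
  fun h => (Int.le_of_dvd h0 h).not_gt hk

lemma dvd_of_eq_sub {x y k : ℤ} (hx : ℓ ∣ x) (hy : ℓ ∣ y) (h : k = x - y) : ℓ ∣ k :=
  h ▸ dvd_sub hx hy

def HasNestedViolation (ℓ : ℤ) (Gap Bead : Set ℤ) : Prop :=
  ∃ g ∈ Gap, ∃ b ∈ Bead, ∃ e ∈ Gap, ∃ f ∈ Bead, g < e ∧ e < b ∧ g < f ∧ f < b ∧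
    ℓ ∣ b - g ∧ ¬ ℓ ∣ b - e ∧ ¬ ℓ ∣ f - g

lemma HasNestedViolation.of_neg (h : HasNestedViolation ℓ (-Bead) (-Gap)) :
    HasNestedViolation ℓ Gap Bead := by
  obtain ⟨g, hg, b, hb, e, he, f, hf, hge, heb, hgf, hfb, hbg, hbe, hfg⟩ := h
  refine ⟨-b, hb, -g, hg, -f, hf, -e, he, by linarith, by linarith, by linarith, by linarith,
    ?_, ?_, ?_⟩ <;> rwa [neg_sub_neg]

lemma HasNestedViolation.of_forall_gap_dvd (hℓ : 2 < ℓ) (cover : ∀ n, n ∈ Gap ∨ n ∈ Bead)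
    {D B E : ℤ} (hD : D ∈ Gap) (hDB : D < B) (hBD : ℓ ∣ B - D)
    (hgaps : ∀ e ∈ Gap, D < e → e < B → ℓ ∣ B - e)
    (hE : E ∈ Gap) (hEB : E < B) (hBE : ¬ ℓ ∣ B - E) :
    HasNestedViolation ℓ Gap Bead := by
  classical
  have hED : E < D := by
    by_contra! h
    rcases h.eq_or_lt with rfl | h
    · exact hBE hBD
    · exact hBE (hgaps E hE h hEB)
  have hbeads : ∀ j, 0 < j → j < ℓ → D + j ∈ Bead := by
    intro j hj hjℓ
    have hℓB : ℓ ≤ B - D := Int.le_of_dvd (by omega) hBD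
    refine (cover _).resolve_left fun hgap => ?_
    exact Int.not_dvd_of_pos_of_lt hj hjℓ
      (dvd_of_eq_sub hBD (hgaps _ hgap (by omega) (by omega)) (by ring))
  obtain ⟨g, ⟨hg, hgD, hBg⟩, hmax⟩ := Int.exists_greatest_of_bdd
    (P := fun n => n ∈ Gap ∧ n ≤ D ∧ ¬ ℓ ∣ B - n) ⟨D, fun n h => h.2.1⟩ ⟨E, hE, hED.le, hBE⟩
  have hgD : g < D := hgD.lt_of_ne fun h => hBg (h ▸ hBD)
  have hgaps_above : ∀ n ∈ Gap, g < n → n ≤ D → ℓ ∣ B - n := fun n hn hgn hnD =>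
    by_contra fun h => (hmax n ⟨hn, hnD, h⟩).not_gt hgn
  set j := (g - D) % ℓ
  have hj0 : 0 < j := by
    refine (Int.emod_nonneg _ (by omega)).lt_of_ne fun h => hBg ?_
    exact dvd_of_eq_sub hBD (Int.dvd_of_emod_eq_zero h.symm) (by ring)
  have hjℓ : j < ℓ := Int.emod_lt_of_pos _ (by omega)
  have hbg : ℓ ∣ D + j - g := ⟨-((g - D) / ℓ), by linarith [Int.emod_add_mul_ediv (g - D) ℓ]⟩
  refine ⟨g, hg, D + j, hbeads j hj0 hjℓ, D, hD, ?_⟩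
  rcases (show j = 1 ∨ 2 ≤ j by omega) with hj1 | hj2
  · have hgD1 : g < D - 1 := by
      refine lt_of_le_of_ne (by omega) fun h => ?_
      exact Int.not_dvd_of_pos_of_lt (by norm_num) hℓ
        (dvd_of_eq_sub hbg (dvd_zero ℓ) (by omega))
    have hf : D - 1 ∈ Bead := (cover _).resolve_left fun hgap =>
      Int.not_dvd_of_pos_of_lt one_pos (by omega)
        (dvd_of_eq_sub (hgaps_above _ hgap hgD1 (by omega)) hBD (by ring))
    refine ⟨D - 1, hf, hgD, by omega, hgD1, by omega, hbg, ?_, fun h => ?_⟩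
    · exact Int.not_dvd_of_pos_of_lt (by omega) (by omega)
    · exact Int.not_dvd_of_pos_of_lt (by norm_num) hℓ (dvd_of_eq_sub hbg h (by omega))
  · refine ⟨D + 1, hbeads 1 one_pos (by omega), hgD, by omega, by omega, by omega, hbg, ?_,
      fun h => ?_⟩
    · exact Int.not_dvd_of_pos_of_lt (by omega) (by omega)
    · exact Int.not_dvd_of_pos_of_lt (by omega : (0 : ℤ) < j - 1) (by omega)
        (dvd_of_eq_sub hbg h (by ring))

lemma HasNestedViolation.of_unnested (hℓ : 2 < ℓ) (cover : ∀ n, n ∈ Gap ∨ n ∈ Bead)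
    {D B E F : ℤ} (hD : D ∈ Gap) (hB : B ∈ Bead) (hDB : D < B) (hBD : ℓ ∣ B - D)
    (hE : E ∈ Gap) (hEB : E < B) (hBE : ¬ ℓ ∣ B - E)
    (hF : F ∈ Bead) (hDF : D < F) (hFD : ¬ ℓ ∣ F - D) :
    HasNestedViolation ℓ Gap Bead := by
  by_cases hgaps : ∀ e ∈ Gap, D < e → e < B → ℓ ∣ B - e
  · exact of_forall_gap_dvd hℓ cover hD hDB hBD hgaps hE hEB hBE
  by_cases hbeads : ∀ f ∈ Bead, D < f → f < B → ℓ ∣ f - D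
  · refine of_neg (of_forall_gap_dvd (D := -B) (B := -D) (E := -F) hℓ
      (fun n => (cover (-n)).symm) (by simpa using hB) (by linarith) (by rwa [neg_sub_neg])
      (fun e he h1 h2 => ?_) (by simpa using hF) (by linarith) (by rwa [neg_sub_neg]))
    simpa [sub_eq_add_neg, add_comm] using hbeads (-e) he (by linarith) (by linarith)
  push Not at hgaps hbeads
  obtain ⟨e, he, hDe, heB, hBe⟩ := hgaps
  obtain ⟨f, hf, hDf, hfB, hfD⟩ := hbeads
  exact ⟨D, hD, B, hB, e, he, f, hf, hDe, heB, hDf, hfB, hBD, hBe, hfD⟩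

end Abacus

namespace YPartition

variable (μ : YPartition)

lemma le_colLen_iff {a b : ℕ} (ha : 1 ≤ a) (hb : 1 ≤ b) : a ≤ μ.colLen b ↔ b ≤ μ.part a := by
  obtain ⟨N, hN⟩ := μ.eventually_zero
  set S := {a' : ℕ | 1 ≤ a' ∧ b ≤ μ.part a'}
  have hS : S.Finite := (Set.finite_Iio N).subset fun a' h => not_le.1 fun h' => by
    have := hN a' h'
    have := h.2
    omega
  have card_Icc (m : ℕ) : Nat.card (Set.Icc 1 m) = m := by simp
  constructor
  · intro h
    by_contra! hlt
    have hsub : S ⊆ Set.Icc 1 (a - 1) := fun a' ⟨h1, h2⟩ =>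
      ⟨h1, by by_contra! h'; have := μ.antitone a a' ha (by omega); omega⟩
    have := Nat.card_mono (Set.finite_Icc 1 (a - 1)) hsub
    rw [card_Icc] at this
    change a ≤ Nat.card S at h
    omega
  · intro h
    change a ≤ Nat.card S
    have hsub : Set.Icc 1 a ⊆ S := fun a' ⟨h1, h2⟩ => ⟨h1, h.trans (μ.antitone a' a h1 h2)⟩
    simpa only [card_Icc] using Nat.card_mono hS hsub

lemma colLen_antitoneOn : AntitoneOn μ.colLen (Set.Ici 1) := by
  intro b hb b' hb' hbb'
  rcases Nat.eq_zero_or_pos (μ.colLen b') with h | h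
  · omega
  · exact (μ.le_colLen_iff h hb).2 (hbb'.trans ((μ.le_colLen_iff h hb').1 le_rfl))

def beadPos (r : ℕ) : ℤ := μ.part r - r

def gapPos (c : ℕ) : ℤ := c - 1 - μ.colLen c

lemma beadPos_strictAntiOn : StrictAntiOn μ.beadPos (Set.Ici 1) := by
  intro r hr r' _ hrr'
  have := μ.antitone r r' hr hrr'.le
  simp only [beadPos]
  omega

lemma gapPos_strictMonoOn : StrictMonoOn μ.gapPos (Set.Ici 1) := by
  intro c hc c' hc' hcc'
  have := μ.colLen_antitoneOn hc hc' hcc'.le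
  simp only [gapPos]
  omega

lemma hook_eq_beadPos_sub_gapPos {r c : ℕ} (h : (r, c) ∈ μ.cells) :
    (μ.hook r c : ℤ) = μ.beadPos r - μ.gapPos c := by
  obtain ⟨hr : 1 ≤ r, hc : 1 ≤ c, hcr : c ≤ μ.part r⟩ := h
  have := (μ.le_colLen_iff hr hc).2 hcr
  simp only [hook, beadPos, gapPos]
  omega

lemma mem_cells_iff_gapPos_lt_beadPos {r c : ℕ} (hr : 1 ≤ r) (hc : 1 ≤ c) :
    (r, c) ∈ μ.cells ↔ μ.gapPos c < μ.beadPos r := by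
  refine ⟨fun h => ?_, fun h => ⟨hr, hc, show c ≤ μ.part r from ?_⟩⟩
  · have := μ.hook_eq_beadPos_sub_gapPos h
    have : 0 < μ.hook r c := Nat.succ_pos _
    omega
  · by_contra! hrc
    have := (μ.le_colLen_iff hr hc).not.2 hrc.not_ge
    simp only [beadPos, gapPos] at h
    omega

lemma dvd_hook_iff {ℓ r c : ℕ} (h : (r, c) ∈ μ.cells) :
    ℓ ∣ μ.hook r c ↔ (ℓ : ℤ) ∣ μ.beadPos r - μ.gapPos c := by
  rw [← Int.natCast_dvd_natCast, μ.hook_eq_beadPos_sub_gapPos h]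

lemma mem_gapPos_image_or_mem_beadPos_image (n : ℤ) :
    n ∈ μ.gapPos '' Set.Ici 1 ∨ n ∈ μ.beadPos '' Set.Ici 1 := by
  classical
  obtain ⟨N, hN⟩ := μ.eventually_zero
  have hex : ∃ r, 1 ≤ r ∧ μ.beadPos r ≤ n :=
    ⟨N + (-n).toNat + 1, by omega, by
      simp only [beadPos, hN (N + (-n).toNat + 1) (by omega)]
      omega⟩
  set r := Nat.find hex
  obtain ⟨hr, hrn⟩ : 1 ≤ r ∧ μ.beadPos r ≤ n := Nat.find_spec hex
  rcases hrn.lt_or_eq with hlt | heq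
  · -- `r` is the first row whose bead is at most `n`, so column `n + r` has length `r - 1`.
    left
    have hc : 1 ≤ (n + r).toNat := by simp only [beadPos] at hlt; omega
    have hcol : μ.colLen (n + r).toNat = r - 1 := by
      have hlt' : μ.colLen (n + r).toNat < r :=
        not_le.1 fun h => by
          have := (μ.le_colLen_iff hr hc).1 h
          simp only [beadPos] at hlt
          omega
      refine le_antisymm (by omega) ?_
      rcases Nat.lt_or_ge r 2 with hr2 | hr2
      · omega
      · have hmin := Nat.find_min hex (m := r - 1) (by omega)
        simp only [beadPos, not_and, not_le] at hmin
        exact (μ.le_colLen_iff (by omega) hc).2 (by have := hmin (by omega); omega)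
    refine ⟨(n + r).toNat, hc, ?_⟩
    simp only [gapPos, hcol]
    omega
  · exact Or.inr ⟨r, hr, heq⟩

end YPartition

open YPartition

/-- If `λ` is not an `(ℓ,0)`-JM partition, then there are boxes `(c,d)`,
`(c,w)`, `(z,d)` of `λ` with `c < z`, `d < w`, `ℓ ∣ h_(c,d)`, `ℓ ∤ h_(c,w)`, `ℓ ∤ h_(z,d)`. -/
theorem statement1 (ℓ : ℕ) (hℓ : 2 < ℓ) (lam : YPartition) (hnotJM : ¬ IsJM ℓ lam) :
    ∃ c d w z : ℕ, (c, d) ∈ lam.cells ∧ (c, w) ∈ lam.cells ∧ (z, d) ∈ lam.cells ∧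
      c < z ∧ d < w ∧
      ℓ ∣ lam.hook c d ∧ ¬ ℓ ∣ lam.hook c w ∧ ¬ ℓ ∣ lam.hook z d := by
  obtain ⟨a, b, y, x, hab, hay, hxb, hdvd, hay', hxb'⟩ := not_not.mp hnotJM
  obtain ⟨_, ⟨d, hd, rfl⟩, _, ⟨c, hc, rfl⟩, _, ⟨w, hw, rfl⟩, _, ⟨z, hz, rfl⟩,
      hdw, hwc, hdz, hzc, hcd, hcw, hzd⟩ :=
    HasNestedViolation.of_unnested (ℓ := ℓ) (by omega) lam.mem_gapPos_image_or_mem_beadPos_image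
      ⟨b, hab.2.1, rfl⟩ ⟨a, hab.1, rfl⟩
      ((lam.mem_cells_iff_gapPos_lt_beadPos hab.1 hab.2.1).1 hab) ((lam.dvd_hook_iff hab).1 hdvd)
      ⟨y, hay.2.1, rfl⟩ ((lam.mem_cells_iff_gapPos_lt_beadPos hay.1 hay.2.1).1 hay)
      (mt (lam.dvd_hook_iff hay).2 hay')
      ⟨x, hxb.1, rfl⟩ ((lam.mem_cells_iff_gapPos_lt_beadPos hxb.1 hxb.2.1).1 hxb)
      (mt (lam.dvd_hook_iff hxb).2 hxb')
  have hcd' := (lam.mem_cells_iff_gapPos_lt_beadPos hc hd).2 (hdw.trans hwc)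
  have hcw' := (lam.mem_cells_iff_gapPos_lt_beadPos hc hw).2 hwc
  have hzd' := (lam.mem_cells_iff_gapPos_lt_beadPos hz hd).2 hdz
  exact ⟨c, d, w, z, hcd', hcw', hzd', (lam.beadPos_strictAntiOn.lt_iff_gt hz hc).1 hzc,
    (lam.gapPos_strictMonoOn.lt_iff_lt hd hw).1 hdw, (lam.dvd_hook_iff hcd').2 hcd,
    mt (lam.dvd_hook_iff hcw').1 hcw, mt (lam.dvd_hook_iff hzd').1 hzd⟩
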